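/- Let p be an odd prime, G = GL₂(𝔽_p), N the normalizer of the diagonal torus, and N' the normalizer of the nonsplit Cartan C' = {[[x, λy],[y, x]] : (x,y) ≠ (0,0)} with λ a fixed non-square. Then in ℤ[N\G/N], the operator NN' × N'N (the composite of the double coset operators ℤ[G/N] → ℤ[G/N'] → ℤ[G/N]) equals ((p−1)/2)·N + Σ_t Nσ_tN, where the sum is over t ∈ (𝔽_p∖{1})/∼ (t ∼ t⁻¹) with (t/p) = −1. -/

import Mathlib

open Matrix Pointwise
open scoped Classical

noncomputable section

abbrev GL2 (p : ℕ) := GL (Fin 2) (ZMod p)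

namespace Chen

variable (p : ℕ)

/-- The Borel subgroup of upper triangular matrices in `GL₂(𝔽_p)`. -/
def Bor : Subgroup (GL2 p) where
  carrier := {g | (g : Matrix (Fin 2) (Fin 2) (ZMod p)) 1 0 = 0}
  one_mem' := by
    show ((1 : GL2 p) : Matrix (Fin 2) (Fin 2) (ZMod p)) 1 0 = 0
    simp [Matrix.one_apply]
  mul_mem' := by
    intro a b ha hb
    show ((a * b : GL2 p) : Matrix (Fin 2) (Fin 2) (ZMod p)) 1 0 = 0
    simp only [Set.mem_setOf_eq] at ha hb
    rw [Units.val_mul, Matrix.mul_apply, Fin.sum_univ_two, ha, hb]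
    ring
  inv_mem' := by
    intro a ha
    show ((a⁻¹ : GL2 p) : Matrix (Fin 2) (Fin 2) (ZMod p)) 1 0 = 0
    simp only [Set.mem_setOf_eq] at ha
    rw [Matrix.coe_units_inv, Matrix.inv_def]
    simp [Matrix.adjugate_fin_two, ha]

/-- The split (diagonal) Cartan subgroup of `GL₂(𝔽_p)`. -/
def Cs : Subgroup (GL2 p) where
  carrier := {g | (g : Matrix (Fin 2) (Fin 2) (ZMod p)) 0 1 = 0 ∧
      (g : Matrix (Fin 2) (Fin 2) (ZMod p)) 1 0 = 0}
  one_mem' := by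
    constructor <;>
    · show ((1 : GL2 p) : Matrix (Fin 2) (Fin 2) (ZMod p)) _ _ = 0
      simp [Matrix.one_apply]
  mul_mem' := by
    intro a b ha hb
    simp only [Set.mem_setOf_eq] at ha hb ⊢
    constructor <;>
    · show ((a * b : GL2 p) : Matrix (Fin 2) (Fin 2) (ZMod p)) _ _ = 0
      rw [Units.val_mul, Matrix.mul_apply, Fin.sum_univ_two]
      simp [ha.1, ha.2, hb.1, hb.2]
  inv_mem' := by
    intro a ha
    simp only [Set.mem_setOf_eq] at ha ⊢
    constructor <;>
    · show ((a⁻¹ : GL2 p) : Matrix (Fin 2) (Fin 2) (ZMod p)) _ _ = 0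
      rw [Matrix.coe_units_inv, Matrix.inv_def]
      simp [Matrix.adjugate_fin_two, ha.1, ha.2]

/-- A (generalized) Cartan subgroup `{[[x, u*y],[y, x]]}` of `GL₂(𝔽_p)`;
for `u = λ` a non-square this is the nonsplit Cartan `C'`, for `u = 1` the split Cartan `C''`. -/
def Cgen (u : ZMod p) : Subgroup (GL2 p) where
  carrier := {g | (g : Matrix (Fin 2) (Fin 2) (ZMod p)) 0 0 =
      (g : Matrix (Fin 2) (Fin 2) (ZMod p)) 1 1 ∧
      (g : Matrix (Fin 2) (Fin 2) (ZMod p)) 0 1 =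
      u * (g : Matrix (Fin 2) (Fin 2) (ZMod p)) 1 0}
  one_mem' := by
    constructor <;> simp [Matrix.one_apply]
  mul_mem' := by
    intro a b ha hb
    simp only [Set.mem_setOf_eq] at ha hb ⊢
    obtain ⟨ha1, ha2⟩ := ha
    obtain ⟨hb1, hb2⟩ := hb
    constructor <;>
    · show ((a * b : GL2 p) : Matrix (Fin 2) (Fin 2) (ZMod p)) _ _ =
        _
      simp only [Units.val_mul, Matrix.mul_apply, Fin.sum_univ_two]
      rw [ha1, ha2, hb1, hb2]
      ring
  inv_mem' := by
    intro a ha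
    simp only [Set.mem_setOf_eq] at ha ⊢
    obtain ⟨ha1, ha2⟩ := ha
    constructor <;>
    · show ((a⁻¹ : GL2 p) : Matrix (Fin 2) (Fin 2) (ZMod p)) _ _ = _
      rw [Matrix.coe_units_inv, Matrix.inv_def]
      simp [Matrix.adjugate_fin_two, ha1, ha2]
      try ring

/-- `N`, the normalizer of the split (diagonal) Cartan subgroup. -/
def Nspl : Subgroup (GL2 p) := Subgroup.normalizer ((Cs p : Set (GL2 p)))

/-- `N'`, the normalizer of the nonsplit Cartan subgroup (for `λ` a non-square). -/
def Nns (lam : ZMod p) : Subgroup (GL2 p) := Subgroup.normalizer ((Cgen p lam : Set (GL2 p)))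

/-- `N''`, the normalizer of the split Cartan `C'' = {[[x,y],[y,x]]}`. -/
def Nspl' : Subgroup (GL2 p) := Subgroup.normalizer ((Cgen p 1 : Set (GL2 p)))

/-- The double coset `N σ_t N` where `σ_t = [[1,1],[1,t]]`. -/
def dosetN (t : ZMod p) : Set (GL2 p) :=
  {g | ∃ a ∈ Nspl p, ∃ b ∈ Nspl p,
    ((a⁻¹ * g * b⁻¹ : GL2 p) : Matrix (Fin 2) (Fin 2) (ZMod p)) = !![1, 1; 1, t]}

/-- The double coset operator `ℝ[G/H] → ℝ[G/K]` (coefficients in `R`) attached to a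
left-`H`-invariant, right-`K`-invariant set `S ⊆ G`: the basis vector `xH` is sent to the
sum of the `K`-cosets contained in `x·S`. -/
def T (R : Type) [CommRing R] {G : Type} [Group G] [Fintype G] (H K : Subgroup G)
    (S : Set G) : ((G ⧸ H) → R) →ₗ[R] ((G ⧸ K) → R) where
  toFun v c := ∑ d : G ⧸ H,
    v d * (if c ∈ QuotientGroup.mk '' ((Quotient.out d) • S) then 1 else 0)
  map_add' := by
    intro u v
    funext c
    simp only [Pi.add_apply]
    rw [← Finset.sum_add_distrib]
    refine Finset.sum_congr rfl fun d _ => ?_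
    ring
  map_smul' := by
    intro a v
    funext c
    simp only [Pi.smul_apply, smul_eq_mul, RingHom.id_apply]
    rw [Finset.mul_sum]
    refine Finset.sum_congr rfl fun d _ => ?_
    ring

end Chen


namespace Chen

variable {p : ℕ} [Fact p.Prime]

abbrev mat (g : GL2 p) : Matrix (Fin 2) (Fin 2) (ZMod p) := (g : Matrix (Fin 2) (Fin 2) (ZMod p))

/-- build an element of GL2 from a matrix with nonzero det -/
def mkGL (A : Matrix (Fin 2) (Fin 2) (ZMod p)) (h : A.det ≠ 0) : GL2 p :=
  Matrix.GeneralLinearGroup.mkOfDetNeZero A h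

@[simp] lemma mkGL_coe (A : Matrix (Fin 2) (Fin 2) (ZMod p)) (h : A.det ≠ 0) :
    (mkGL A h : Matrix (Fin 2) (Fin 2) (ZMod p)) = A := rfl

lemma det_ne_zero (g : GL2 p) : (mat g).det ≠ 0 := by
  have : IsUnit (mat g).det := ⟨Matrix.GeneralLinearGroup.det g, rfl⟩
  exact this.ne_zero

lemma det_expand (g : GL2 p) :
    mat g 0 0 * mat g 1 1 - mat g 0 1 * mat g 1 0 ≠ 0 := by
  have := det_ne_zero g
  rwa [Matrix.det_fin_two] at this

lemma mat_mul (g h : GL2 p) : mat (g * h) = mat g * mat h := rfl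

lemma mat_mul_apply (g h : GL2 p) (i j : Fin 2) :
    mat (g * h) i j = mat g i 0 * mat h 0 j + mat g i 1 * mat h 1 j := by
  rw [mat_mul, Matrix.mul_apply, Fin.sum_univ_two]

lemma two_ne_zero' (hodd : Odd p) : (2 : ZMod p) ≠ 0 := by
  have hp := (Fact.out : p.Prime)
  intro h
  have : ((2 : ℕ) : ZMod p) = 0 := by exact_mod_cast h
  rw [ZMod.natCast_eq_zero_iff] at this
  rcases (Nat.prime_dvd_prime_iff_eq hp Nat.prime_two).mp this with rfl
  simp [Nat.odd_iff] at hodd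

lemma mem_Cs_iff (n : GL2 p) : n ∈ Cs p ↔ (mat n 0 1 = 0 ∧ mat n 1 0 = 0) := Iff.rfl

def isMono (g : GL2 p) : Prop :=
  (mat g 0 1 = 0 ∧ mat g 1 0 = 0) ∨ (mat g 0 0 = 0 ∧ mat g 1 1 = 0)

lemma mat_inv (g : GL2 p) : mat (g⁻¹) =
    Ring.inverse (mat g).det •
      !![mat g 1 1, -(mat g 0 1); -(mat g 1 0), mat g 0 0] := by
  rw [show mat (g⁻¹) = ((g : Matrix (Fin 2) (Fin 2) (ZMod p)))⁻¹ from Matrix.coe_units_inv g,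
    Matrix.inv_def, Matrix.adjugate_fin_two]

lemma isMono_inv {g : GL2 p} (h : isMono g) : isMono g⁻¹ := by
  rcases h with ⟨h1, h2⟩ | ⟨h1, h2⟩ <;> [left; right] <;>
    constructor <;> (rw [mat_inv]; simp [h1, h2])

lemma conj_mem_Cs {g : GL2 p} (hg : isMono g) {n : GL2 p} (hn : n ∈ Cs p) :
    g * n * g⁻¹ ∈ Cs p := by
  rw [mem_Cs_iff] at hn ⊢
  obtain ⟨hn1, hn2⟩ := hn
  have hexp : ∀ i j, mat (g * n * g⁻¹) i j =
      (mat g * mat n * mat g⁻¹) i j := fun i j => rfl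
  rcases hg with ⟨h1, h2⟩ | ⟨h1, h2⟩ <;>
    constructor <;>
    · rw [hexp, mat_inv]
      simp only [Matrix.mul_apply, Fin.sum_univ_two, Matrix.smul_apply, smul_eq_mul,
        Matrix.cons_val', Matrix.cons_val_zero, Matrix.cons_val_one, Matrix.head_cons,
        Matrix.empty_val', Matrix.cons_val_fin_one, Matrix.of_apply, Matrix.head_fin_const]
      simp [h1, h2, hn1, hn2]

/-- membership in the normalizer of the split Cartan: monomial matrices -/
lemma mem_Nspl_iff (hodd : Odd p) (g : GL2 p) :
    g ∈ Nspl p ↔ isMono g := by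
  constructor
  · intro h
    have hE : mkGL !![(-1 : ZMod p), 0; 0, 1] (by simp [Matrix.det_fin_two]) ∈ Cs p := by
      rw [mem_Cs_iff]; constructor <;> simp
    have hM := (Subgroup.mem_normalizer_iff.mp
      (show g ∈ Subgroup.normalizer ((Cs p : Set (GL2 p))) from h) _).mp hE
    rw [mem_Cs_iff] at hM
    obtain ⟨hM1, hM2⟩ := hM
    have hΔ := det_expand g
    have h2 := two_ne_zero' (p := p) hodd
    have hexp : ∀ i j, mat (g * _ * g⁻¹) i j =
        (mat g * mat (mkGL !![(-1 : ZMod p), 0; 0, 1]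
          (by simp [Matrix.det_fin_two])) * mat g⁻¹) i j := fun i j => rfl
    rw [hexp, mat_inv] at hM1 hM2
    simp only [Matrix.mul_apply, Fin.sum_univ_two, Matrix.smul_apply, smul_eq_mul,
      mkGL_coe, Matrix.cons_val', Matrix.cons_val_zero, Matrix.cons_val_one,
      Matrix.head_cons, Matrix.head_fin_const, Matrix.empty_val',
      Matrix.cons_val_fin_one, Matrix.of_apply] at hM1 hM2
    have hΔ' : (mat g).det ≠ 0 := det_ne_zero g
    rw [Ring.inverse_eq_inv'] at hM1 hM2
    have hab : mat g 0 0 * mat g 0 1 = 0 := by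
      have h' : (2 : ZMod p) * (mat g 0 0 * mat g 0 1) * ((mat g).det)⁻¹ = 0 := by
        first
          | linear_combination hM1
          | linear_combination -hM1
      rcases mul_eq_zero.mp h' with h'' | h''
      · rcases mul_eq_zero.mp h'' with h3 | h3
        · exact absurd h3 h2
        · exact h3
      · exact absurd h'' (inv_ne_zero hΔ')
    have hcd : mat g 1 0 * mat g 1 1 = 0 := by
      have h' : (2 : ZMod p) * (mat g 1 0 * mat g 1 1) * ((mat g).det)⁻¹ = 0 := by
        first
          | linear_combination hM2
          | linear_combination -hM2
      rcases mul_eq_zero.mp h' with h'' | h''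
      · rcases mul_eq_zero.mp h'' with h3 | h3
        · exact absurd h3 h2
        · exact h3
      · exact absurd h'' (inv_ne_zero hΔ')
    rcases mul_eq_zero.mp hab with ha | hb
    · right
      refine ⟨ha, ?_⟩
      rcases mul_eq_zero.mp hcd with hc | hd
      · exfalso; apply hΔ; rw [ha, hc]; ring
      · exact hd
    · left
      refine ⟨hb, ?_⟩
      rcases mul_eq_zero.mp hcd with hc | hd
      · exact hc
      · exfalso; apply hΔ; rw [hb, hd]; ring
  · intro hg
    rw [Nspl, Subgroup.mem_normalizer_iff]
    intro n
    constructor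
    · exact fun hn => conj_mem_Cs hg hn
    · intro hc
      have := conj_mem_Cs (isMono_inv hg) hc
      have heq : g⁻¹ * (g * n * g⁻¹) * (g⁻¹)⁻¹ = n := by group
      rwa [heq] at this

section Nns

variable {lam : ZMod p}

lemma lam_ne_zero (hlam : ¬ IsSquare lam) : lam ≠ 0 := by
  rintro rfl; exact hlam ⟨0, (mul_zero 0).symm⟩

lemma mem_Cgen_iff (u : ZMod p) (n : GL2 p) : n ∈ Cgen p u ↔
    (mat n 0 0 = mat n 1 1 ∧ mat n 0 1 = u * mat n 1 0) := Iff.rfl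

def isNsh (lam : ZMod p) (g : GL2 p) : Prop :=
  (mat g 0 0 = mat g 1 1 ∧ mat g 0 1 = lam * mat g 1 0) ∨
  (mat g 0 0 = -mat g 1 1 ∧ mat g 0 1 = -(lam * mat g 1 0))

lemma isNsh_inv {g : GL2 p} (h : isNsh lam g) : isNsh lam g⁻¹ := by
  rcases h with ⟨h1, h2⟩ | ⟨h1, h2⟩ <;> [left; right] <;>
    (constructor <;> (rw [mat_inv]; simp [h1, h2]) <;> ring)

lemma conj_mem_Cgen {g : GL2 p} (hg : isNsh lam g) {n : GL2 p} (hn : n ∈ Cgen p lam) :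
    g * n * g⁻¹ ∈ Cgen p lam := by
  rw [mem_Cgen_iff] at hn ⊢
  obtain ⟨hn1, hn2⟩ := hn
  have hexp : ∀ i j, mat (g * n * g⁻¹) i j =
      (mat g * mat n * mat g⁻¹) i j := fun i j => rfl
  rcases hg with ⟨h1, h2⟩ | ⟨h1, h2⟩ <;>
    (constructor <;>
    · rw [hexp, hexp, mat_inv]
      simp only [Matrix.mul_apply, Fin.sum_univ_two, Matrix.smul_apply, smul_eq_mul,
        Matrix.cons_val', Matrix.cons_val_zero, Matrix.cons_val_one, Matrix.head_cons,
        Matrix.empty_val', Matrix.cons_val_fin_one, Matrix.of_apply, Matrix.head_fin_const]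
      rw [h1, h2, hn1, hn2]; ring)

lemma mem_Nns_iff (hodd : Odd p) (hlam : ¬ IsSquare lam) (g : GL2 p) :
    g ∈ Nns p lam ↔ isNsh lam g := by
  have hlam0 : lam ≠ 0 := lam_ne_zero hlam
  constructor
  · intro h
    unfold isNsh
    have hdetE : (!![(0 : ZMod p), lam; 1, 0]).det ≠ 0 := by
      simp [Matrix.det_fin_two, hlam0]
    have hE : mkGL !![(0 : ZMod p), lam; 1, 0] hdetE ∈ Cgen p lam := by
      rw [mem_Cgen_iff]; constructor <;> simp
    have hM := (Subgroup.mem_normalizer_iff.mp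
      (show g ∈ Subgroup.normalizer ((Cgen p lam : Set (GL2 p))) from h) _).mp hE
    rw [mem_Cgen_iff] at hM
    obtain ⟨hM1, hM2⟩ := hM
    have hΔ := det_expand g
    have h2 := two_ne_zero' (p := p) hodd
    have hΔ' : (mat g).det ≠ 0 := det_ne_zero g
    have hexp : ∀ i j, mat (g * mkGL !![(0 : ZMod p), lam; 1, 0] hdetE * g⁻¹) i j =
        (mat g * mat (mkGL !![(0 : ZMod p), lam; 1, 0] hdetE) * mat g⁻¹) i j :=
      fun i j => rfl
    rw [hexp, hexp, mat_inv] at hM1 hM2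
    simp only [Matrix.mul_apply, Fin.sum_univ_two, Matrix.smul_apply, smul_eq_mul,
      mkGL_coe, Matrix.cons_val', Matrix.cons_val_zero, Matrix.cons_val_one,
      Matrix.head_cons, Matrix.head_fin_const, Matrix.empty_val',
      Matrix.cons_val_fin_one, Matrix.of_apply] at hM1 hM2
    rw [Ring.inverse_eq_inv'] at hM1 hM2
    set a := mat g 0 0 with ha_def
    set b := mat g 0 1 with hb_def
    set c := mat g 1 0 with hc_def
    set d := mat g 1 1 with hd_def
    have hbd : b * d = lam * (a * c) := by
      have h' : (2 : ZMod p) * (b * d - lam * (a * c)) * ((mat g).det)⁻¹ = 0 := by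
        first
          | linear_combination hM1
          | linear_combination -hM1
      rcases mul_eq_zero.mp h' with h'' | h''
      · rcases mul_eq_zero.mp h'' with h3 | h3
        · exact absurd h3 h2
        · linear_combination h3
      · exact absurd h'' (inv_ne_zero hΔ')
    have hquad : lam * (a * a) - b * b - lam * (d * d) + lam * lam * (c * c) = 0 := by
      have h' : (lam * (a * a) - b * b - lam * (d * d) + lam * lam * (c * c)) *
          ((mat g).det)⁻¹ = 0 := by
        first
          | linear_combination hM2
          | linear_combination -hM2
      rcases mul_eq_zero.mp h' with h'' | h''
      · exact h''
      · exact absurd h'' (inv_ne_zero hΔ')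
    by_cases hd0 : d = 0
    · have hac : a = 0 ∨ c = 0 := by
        have h' : lam * (a * c) = 0 := by rw [hd0] at hbd; linear_combination -hbd
        rcases mul_eq_zero.mp h' with h'' | h''
        · exact absurd h'' hlam0
        · exact mul_eq_zero.mp h''
      rcases hac with ha0 | hc0
      · have hbb : b * b = (lam * c) * (lam * c) := by
          rw [hd0, ha0] at hquad; linear_combination -hquad
        rcases mul_self_eq_mul_self_iff.mp hbb with hb | hb
        · exact Or.inl ⟨by rw [ha0, hd0], hb⟩
        · exact Or.inr ⟨by rw [ha0, hd0]; ring, hb⟩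
      · exfalso; apply hΔ; rw [hd0, hc0]; ring
    · have hkey0 : lam * ((a * a - d * d) * (d * d - lam * (c * c))) = 0 := by
        linear_combination (d * d) * hquad + (b * d + lam * (a * c)) * hbd
      have key : (a * a - d * d) * (d * d - lam * (c * c)) = 0 :=
        (mul_eq_zero.mp hkey0).resolve_left hlam0
      rcases mul_eq_zero.mp key with h'' | h''
      · have haa : a * a = d * d := by linear_combination h''
        rcases mul_self_eq_mul_self_iff.mp haa with had | had
        · left
          refine ⟨had, ?_⟩
          have h3 : d * (b - lam * c) = 0 := by
            rw [had] at hbd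
            first | linear_combination hbd | linear_combination -hbd
          rcases mul_eq_zero.mp h3 with h4 | h4
          · exact absurd h4 hd0
          · linear_combination h4
        · right
          refine ⟨had, ?_⟩
          have h3 : d * (b + lam * c) = 0 := by
            rw [had] at hbd
            first | linear_combination hbd | linear_combination -hbd
          rcases mul_eq_zero.mp h3 with h4 | h4
          · exact absurd h4 hd0
          · first | linear_combination h4 | linear_combination -h4
      · exfalso
        by_cases hc0 : c = 0
        · rw [hc0] at h''
          exact hd0 (mul_self_eq_zero.mp (by linear_combination h''))
        · apply hlam
          refine ⟨d * c⁻¹, ?_⟩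
          field_simp
          linear_combination -h''
  · intro hg
    rw [Nns, Subgroup.mem_normalizer_iff]
    intro n
    constructor
    · exact fun hn => conj_mem_Cgen hg hn
    · intro hc
      have := conj_mem_Cgen (isNsh_inv hg) hc
      have heq : g⁻¹ * (g * n * g⁻¹) * (g⁻¹)⁻¹ = n := by group
      rwa [heq] at this

end Nns

section Products

variable {lam : ZMod p}

lemma coe_mem {A : Subgroup (GL2 p)} {x : GL2 p} (h : x ∈ (A : Set (GL2 p))) : x ∈ A := h

lemma diag_mem_Nspl (hodd : Odd p) (u v : ZMod p) (h : u * v ≠ 0) :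
    mkGL !![u, 0; 0, v] (by
      simp [Matrix.det_fin_two]
      exact ⟨left_ne_zero_of_mul h, right_ne_zero_of_mul h⟩) ∈
      Nspl p := by
  rw [mem_Nspl_iff hodd]; exact Or.inl ⟨by simp, by simp⟩

/-- characterization of the product set `N'N`. -/
lemma mem_NnsNspl_iff (hodd : Odd p) (hlam : ¬ IsSquare lam) (y : GL2 p) :
    y ∈ (Nns p lam : Set (GL2 p)) * (Nspl p : Set (GL2 p)) ↔
      mat y 0 0 * mat y 0 1 = lam * (mat y 1 0 * mat y 1 1) := by
  constructor
  · rintro ⟨k, hk, n, hn, rfl⟩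
    replace hk : k ∈ Nns p lam := hk
    replace hn : n ∈ Nspl p := hn
    rw [mem_Nns_iff hodd hlam] at hk
    rw [mem_Nspl_iff hodd] at hn
    rcases hk with ⟨hk1, hk2⟩ | ⟨hk1, hk2⟩ <;> rcases hn with ⟨hn1, hn2⟩ | ⟨hn1, hn2⟩ <;>
      (simp only [mat_mul_apply]; rw [hk1, hk2, hn1, hn2]; ring)
  · intro hy
    have hΔ := det_expand y
    by_cases ha : mat y 0 0 = 0
    · have hd : mat y 1 1 = 0 := by
        rcases mul_eq_zero.mp (show lam * (mat y 1 0 * mat y 1 1) = 0 by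
          rw [← hy, ha]; ring) with h' | h'
        · exact absurd h' (lam_ne_zero hlam)
        · rcases mul_eq_zero.mp h' with h'' | h''
          · exfalso; apply hΔ; rw [ha, h'']; ring
          · exact h''
      exact ⟨1, (Nns p lam).one_mem, y, by
        show y ∈ Nspl p
        rw [mem_Nspl_iff hodd]; exact Or.inr ⟨ha, hd⟩, one_mul y⟩
    · by_cases hd : mat y 1 1 = 0
      · exfalso
        have hb : mat y 0 1 = 0 := by
          rcases mul_eq_zero.mp (show mat y 0 0 * mat y 0 1 = 0 by
            rw [hy, hd]; ring) with h' | h'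
          · exact absurd h' ha
          · exact h'
        apply hΔ; rw [hb, hd]; ring
      · have hdet : mat y 1 1 * mat y 0 0 ≠ 0 := mul_ne_zero hd ha
        set n₀ : GL2 p := mkGL !![mat y 1 1, 0; 0, mat y 0 0]
          (by
            simp [Matrix.det_fin_two]
            exact ⟨left_ne_zero_of_mul hdet, right_ne_zero_of_mul hdet⟩) with hn₀
        refine ⟨y * n₀, ?_, n₀⁻¹, ?_, mul_inv_cancel_right y n₀⟩
        · show y * n₀ ∈ Nns p lam
          rw [mem_Nns_iff hodd hlam]
          left
          refine ⟨?_, ?_⟩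
          · simp only [mat_mul_apply, hn₀, mkGL_coe, Matrix.cons_val', Matrix.cons_val_zero,
              Matrix.cons_val_one, Matrix.head_cons, Matrix.empty_val',
              Matrix.cons_val_fin_one, Matrix.of_apply, Matrix.head_fin_const]
            ring
          · simp only [mat_mul_apply, hn₀, mkGL_coe, Matrix.cons_val', Matrix.cons_val_zero,
              Matrix.cons_val_one, Matrix.head_cons, Matrix.empty_val',
              Matrix.cons_val_fin_one, Matrix.of_apply, Matrix.head_fin_const]
            linear_combination hy
        · show n₀⁻¹ ∈ Nspl p
          exact (Nspl p).inv_mem (diag_mem_Nspl hodd _ _ hdet)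

/-- characterization of the product set `NN'`. -/
lemma mem_NsplNns_iff (hodd : Odd p) (hlam : ¬ IsSquare lam) (y : GL2 p) :
    y ∈ (Nspl p : Set (GL2 p)) * (Nns p lam : Set (GL2 p)) ↔
      mat y 0 1 * mat y 1 1 = lam * (mat y 0 0 * mat y 1 0) := by
  constructor
  · rintro ⟨n, hn, k, hk, rfl⟩
    replace hk : k ∈ Nns p lam := hk
    replace hn : n ∈ Nspl p := hn
    rw [mem_Nns_iff hodd hlam] at hk
    rw [mem_Nspl_iff hodd] at hn
    rcases hk with ⟨hk1, hk2⟩ | ⟨hk1, hk2⟩ <;> rcases hn with ⟨hn1, hn2⟩ | ⟨hn1, hn2⟩ <;>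
      (simp only [mat_mul_apply]; rw [hk1, hk2, hn1, hn2]; ring)
  · intro hy
    have hΔ := det_expand y
    by_cases ha : mat y 0 0 = 0
    · have hd : mat y 1 1 = 0 := by
        rcases mul_eq_zero.mp (show mat y 0 1 * mat y 1 1 = 0 by
          rw [hy, ha]; ring) with h' | h'
        · exfalso; apply hΔ; rw [ha, h']; ring
        · exact h'
      exact ⟨y, by
        show y ∈ Nspl p
        rw [mem_Nspl_iff hodd]; exact Or.inr ⟨ha, hd⟩, 1, (Nns p lam).one_mem, mul_one y⟩
    · by_cases hd : mat y 1 1 = 0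
      · exfalso
        have hc : mat y 1 0 = 0 := by
          rcases mul_eq_zero.mp (show lam * (mat y 0 0 * mat y 1 0) = 0 by
            rw [← hy, hd]; ring) with h' | h'
          · exact absurd h' (lam_ne_zero hlam)
          · exact (mul_eq_zero.mp h').resolve_left ha
        apply hΔ; rw [hd, hc]; ring
      · have hdet : mat y 1 1 * mat y 0 0 ≠ 0 := mul_ne_zero hd ha
        set n₀ : GL2 p := mkGL !![mat y 1 1, 0; 0, mat y 0 0]
          (by
            simp [Matrix.det_fin_two]
            exact ⟨left_ne_zero_of_mul hdet, right_ne_zero_of_mul hdet⟩) with hn₀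
        refine ⟨n₀⁻¹, ?_, n₀ * y, ?_, inv_mul_cancel_left n₀ y⟩
        · show n₀⁻¹ ∈ Nspl p
          exact (Nspl p).inv_mem (diag_mem_Nspl hodd _ _ hdet)
        · show n₀ * y ∈ Nns p lam
          rw [mem_Nns_iff hodd hlam]
          left
          refine ⟨?_, ?_⟩
          · simp only [mat_mul_apply, hn₀, mkGL_coe, Matrix.cons_val', Matrix.cons_val_zero,
              Matrix.cons_val_one, Matrix.head_cons, Matrix.empty_val',
              Matrix.cons_val_fin_one, Matrix.of_apply, Matrix.head_fin_const]
            ring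
          · simp only [mat_mul_apply, hn₀, mkGL_coe, Matrix.cons_val', Matrix.cons_val_zero,
              Matrix.cons_val_one, Matrix.head_cons, Matrix.empty_val',
              Matrix.cons_val_fin_one, Matrix.of_apply, Matrix.head_fin_const]
            linear_combination hy

end Products

section Doset

/-- all entries nonzero -/
def entsNZ (g : GL2 p) : Prop :=
  mat g 0 0 ≠ 0 ∧ mat g 0 1 ≠ 0 ∧ mat g 1 0 ≠ 0 ∧ mat g 1 1 ≠ 0

/-- invariant picking out the double coset `N σ_t N` -/
def Pdc (t : ZMod p) (g : GL2 p) : Prop := entsNZ g ∧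
  (mat g 0 0 * mat g 1 1 = t * (mat g 0 1 * mat g 1 0) ∨
   t * (mat g 0 0 * mat g 1 1) = mat g 0 1 * mat g 1 0)

lemma Pdc_mul_left (hodd : Odd p) {n : GL2 p} (hn : n ∈ Nspl p) (t : ZMod p) (g : GL2 p) :
    Pdc t (n * g) ↔ Pdc t g := by
  have hΔ := det_expand n
  rw [mem_Nspl_iff hodd] at hn
  rcases hn with ⟨hn1, hn2⟩ | ⟨hn1, hn2⟩
  · have hα : mat n 0 0 ≠ 0 := fun h => hΔ (by rw [h, hn1]; ring)
    have hβ : mat n 1 1 ≠ 0 := fun h => hΔ (by rw [h, hn2]; ring)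
    have e00 : mat (n * g) 0 0 = mat n 0 0 * mat g 0 0 := by rw [mat_mul_apply, hn1]; ring
    have e01 : mat (n * g) 0 1 = mat n 0 0 * mat g 0 1 := by rw [mat_mul_apply, hn1]; ring
    have e10 : mat (n * g) 1 0 = mat n 1 1 * mat g 1 0 := by rw [mat_mul_apply, hn2]; ring
    have e11 : mat (n * g) 1 1 = mat n 1 1 * mat g 1 1 := by rw [mat_mul_apply, hn2]; ring
    unfold Pdc entsNZ
    rw [e00, e01, e10, e11]
    constructor
    · rintro ⟨⟨z1, z2, z3, z4⟩, hor⟩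
      refine ⟨⟨right_ne_zero_of_mul z1, right_ne_zero_of_mul z2,
        right_ne_zero_of_mul z3, right_ne_zero_of_mul z4⟩, ?_⟩
      rcases hor with hor | hor <;> [left; right] <;>
        · apply mul_left_cancel₀ (mul_ne_zero hα hβ)
          first | linear_combination hor | linear_combination -hor
    · rintro ⟨⟨z1, z2, z3, z4⟩, hor⟩
      refine ⟨⟨mul_ne_zero hα z1, mul_ne_zero hα z2, mul_ne_zero hβ z3,
        mul_ne_zero hβ z4⟩, ?_⟩
      rcases hor with hor | hor <;> [left; right] <;>
        first
          | linear_combination (mat n 0 0 * mat n 1 1) * hor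
          | linear_combination (-(mat n 0 0 * mat n 1 1)) * hor
  · have hx : mat n 0 1 ≠ 0 := fun h => hΔ (by rw [h, hn1]; ring)
    have hy : mat n 1 0 ≠ 0 := fun h => hΔ (by rw [h, hn2]; ring)
    have e00 : mat (n * g) 0 0 = mat n 0 1 * mat g 1 0 := by rw [mat_mul_apply, hn1]; ring
    have e01 : mat (n * g) 0 1 = mat n 0 1 * mat g 1 1 := by rw [mat_mul_apply, hn1]; ring
    have e10 : mat (n * g) 1 0 = mat n 1 0 * mat g 0 0 := by rw [mat_mul_apply, hn2]; ring
    have e11 : mat (n * g) 1 1 = mat n 1 0 * mat g 0 1 := by rw [mat_mul_apply, hn2]; ring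
    unfold Pdc entsNZ
    rw [e00, e01, e10, e11]
    constructor
    · rintro ⟨⟨z1, z2, z3, z4⟩, hor⟩
      refine ⟨⟨right_ne_zero_of_mul z3, right_ne_zero_of_mul z4,
        right_ne_zero_of_mul z1, right_ne_zero_of_mul z2⟩, ?_⟩
      rcases hor with hor | hor <;> [right; left] <;>
        · apply mul_left_cancel₀ (mul_ne_zero hx hy)
          first | linear_combination hor | linear_combination -hor
    · rintro ⟨⟨z1, z2, z3, z4⟩, hor⟩
      refine ⟨⟨mul_ne_zero hx z3, mul_ne_zero hx z4, mul_ne_zero hy z1,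
        mul_ne_zero hy z2⟩, ?_⟩
      rcases hor with hor | hor <;> [right; left] <;>
        first
          | linear_combination (mat n 0 1 * mat n 1 0) * hor
          | linear_combination (-(mat n 0 1 * mat n 1 0)) * hor

lemma Pdc_mul_right (hodd : Odd p) {n : GL2 p} (hn : n ∈ Nspl p) (t : ZMod p) (g : GL2 p) :
    Pdc t (g * n) ↔ Pdc t g := by
  have hΔ := det_expand n
  rw [mem_Nspl_iff hodd] at hn
  rcases hn with ⟨hn1, hn2⟩ | ⟨hn1, hn2⟩
  · have hα : mat n 0 0 ≠ 0 := fun h => hΔ (by rw [h, hn1]; ring)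
    have hβ : mat n 1 1 ≠ 0 := fun h => hΔ (by rw [h, hn2]; ring)
    have e00 : mat (g * n) 0 0 = mat g 0 0 * mat n 0 0 := by rw [mat_mul_apply, hn2]; ring
    have e01 : mat (g * n) 0 1 = mat g 0 1 * mat n 1 1 := by rw [mat_mul_apply, hn1]; ring
    have e10 : mat (g * n) 1 0 = mat g 1 0 * mat n 0 0 := by rw [mat_mul_apply, hn2]; ring
    have e11 : mat (g * n) 1 1 = mat g 1 1 * mat n 1 1 := by rw [mat_mul_apply, hn1]; ring
    unfold Pdc entsNZ
    rw [e00, e01, e10, e11]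
    constructor
    · rintro ⟨⟨z1, z2, z3, z4⟩, hor⟩
      refine ⟨⟨left_ne_zero_of_mul z1, left_ne_zero_of_mul z2,
        left_ne_zero_of_mul z3, left_ne_zero_of_mul z4⟩, ?_⟩
      rcases hor with hor | hor <;> [left; right] <;>
        · apply mul_left_cancel₀ (mul_ne_zero hα hβ)
          first | linear_combination hor | linear_combination -hor
    · rintro ⟨⟨z1, z2, z3, z4⟩, hor⟩
      refine ⟨⟨mul_ne_zero z1 hα, mul_ne_zero z2 hβ, mul_ne_zero z3 hα,
        mul_ne_zero z4 hβ⟩, ?_⟩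
      rcases hor with hor | hor <;> [left; right] <;>
        first
          | linear_combination (mat n 0 0 * mat n 1 1) * hor
          | linear_combination (-(mat n 0 0 * mat n 1 1)) * hor
  · have hx : mat n 0 1 ≠ 0 := fun h => hΔ (by rw [h, hn1]; ring)
    have hy : mat n 1 0 ≠ 0 := fun h => hΔ (by rw [h, hn2]; ring)
    have e00 : mat (g * n) 0 0 = mat g 0 1 * mat n 1 0 := by rw [mat_mul_apply, hn1]; ring
    have e01 : mat (g * n) 0 1 = mat g 0 0 * mat n 0 1 := by rw [mat_mul_apply, hn2]; ring
    have e10 : mat (g * n) 1 0 = mat g 1 1 * mat n 1 0 := by rw [mat_mul_apply, hn1]; ring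
    have e11 : mat (g * n) 1 1 = mat g 1 0 * mat n 0 1 := by rw [mat_mul_apply, hn2]; ring
    unfold Pdc entsNZ
    rw [e00, e01, e10, e11]
    constructor
    · rintro ⟨⟨z1, z2, z3, z4⟩, hor⟩
      refine ⟨⟨left_ne_zero_of_mul z2, left_ne_zero_of_mul z1,
        left_ne_zero_of_mul z4, left_ne_zero_of_mul z3⟩, ?_⟩
      rcases hor with hor | hor <;> [right; left] <;>
        · apply mul_left_cancel₀ (mul_ne_zero hx hy)
          first | linear_combination hor | linear_combination -hor
    · rintro ⟨⟨z1, z2, z3, z4⟩, hor⟩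
      refine ⟨⟨mul_ne_zero z2 hy, mul_ne_zero z1 hx, mul_ne_zero z4 hy,
        mul_ne_zero z3 hx⟩, ?_⟩
      rcases hor with hor | hor <;> [right; left] <;>
        first
          | linear_combination (mat n 0 1 * mat n 1 0) * hor
          | linear_combination (-(mat n 0 1 * mat n 1 0)) * hor

lemma mem_dosetN_iff (hodd : Odd p) {t : ZMod p} (ht0 : t ≠ 0) (ht1 : t ≠ 1) (g : GL2 p) :
    g ∈ dosetN p t ↔ Pdc t g := by
  constructor
  · rintro ⟨n₁, h1, n₂, h2, heq⟩
    have heq' : mat (n₁⁻¹ * g * n₂⁻¹) = !![(1 : ZMod p), 1; 1, t] := heq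
    have hP : Pdc t (n₁⁻¹ * g * n₂⁻¹) := by
      refine ⟨⟨?_, ?_, ?_, ?_⟩, ?_⟩
      · rw [heq']; simp
      · rw [heq']; simp
      · rw [heq']; simp
      · rw [heq']; simpa using ht0
      · left
        rw [heq']; simp
    have hg : g = n₁ * ((n₁⁻¹ * g * n₂⁻¹) * n₂) := by group
    rw [hg, Pdc_mul_left hodd h1, Pdc_mul_right hodd h2]
    exact hP
  · rintro ⟨⟨za, zb, zc, zd⟩, hor⟩
    have hσdet : (!![(1 : ZMod p), 1; 1, t]).det ≠ 0 := by
      simp [Matrix.det_fin_two, sub_ne_zero]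
      first | exact ht1 | exact fun h => ht1 h.symm
    set σ : GL2 p := mkGL !![(1 : ZMod p), 1; 1, t] hσdet with hσ
    rcases hor with hor | hor
    · have hd1 : (!![mat g 0 0, 0; 0, mat g 1 0]).det ≠ 0 := by
        simp [Matrix.det_fin_two]
        exact ⟨za, zc⟩
      have hd2 : (!![(1 : ZMod p), 0; 0, mat g 0 1 * (mat g 0 0)⁻¹]).det ≠ 0 := by
        simp [Matrix.det_fin_two]
        exact ⟨zb, za⟩
      set n₁ : GL2 p := mkGL _ hd1 with hn₁
      set n₂ : GL2 p := mkGL _ hd2 with hn₂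
      have hgeq : g = n₁ * σ * n₂ := by
        apply Matrix.GeneralLinearGroup.ext
        simp only [Fin.forall_fin_two]
        refine ⟨⟨?_, ?_⟩, ?_, ?_⟩ <;>
          · show mat g _ _ = mat (n₁ * σ * n₂) _ _
            simp only [Fin.mk_zero, Fin.mk_one, Fin.isValue, mat_mul_apply, hn₁, hn₂, hσ,
              mkGL_coe, Matrix.cons_val', Matrix.cons_val_zero, Matrix.cons_val_one,
              Matrix.head_cons, Matrix.empty_val', Matrix.cons_val_fin_one, Matrix.of_apply,
              Matrix.head_fin_const]
            field_simp
            try linear_combination hor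
            try linear_combination -hor
            try ring
            try rfl
      refine ⟨n₁, ?_, n₂, ?_, ?_⟩
      · rw [mem_Nspl_iff hodd]; left; constructor <;> simp [hn₁]
      · rw [mem_Nspl_iff hodd]; left; constructor <;> simp [hn₂]
      · have : n₁⁻¹ * g * n₂⁻¹ = σ := by rw [hgeq]; group
        rw [this, hσ, mkGL_coe]
    · have hd1 : (!![(0 : ZMod p), mat g 0 0; mat g 1 0, 0]).det ≠ 0 := by
        simp [Matrix.det_fin_two]
        exact ⟨za, zc⟩
      have hd2 : (!![(1 : ZMod p), 0; 0, mat g 1 1 * (mat g 1 0)⁻¹]).det ≠ 0 := by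
        simp [Matrix.det_fin_two]
        exact ⟨zd, zc⟩
      set n₁ : GL2 p := mkGL _ hd1 with hn₁
      set n₂ : GL2 p := mkGL _ hd2 with hn₂
      have hgeq : g = n₁ * σ * n₂ := by
        apply Matrix.GeneralLinearGroup.ext
        simp only [Fin.forall_fin_two]
        refine ⟨⟨?_, ?_⟩, ?_, ?_⟩ <;>
          · show mat g _ _ = mat (n₁ * σ * n₂) _ _
            simp only [Fin.mk_zero, Fin.mk_one, Fin.isValue, mat_mul_apply, hn₁, hn₂, hσ,
              mkGL_coe, Matrix.cons_val', Matrix.cons_val_zero, Matrix.cons_val_one,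
              Matrix.head_cons, Matrix.empty_val', Matrix.cons_val_fin_one, Matrix.of_apply,
              Matrix.head_fin_const]
            field_simp
            try linear_combination hor
            try linear_combination -hor
            try ring
            try rfl
      refine ⟨n₁, ?_, n₂, ?_, ?_⟩
      · rw [mem_Nspl_iff hodd]; right; constructor <;> simp [hn₁]
      · rw [mem_Nspl_iff hodd]; left; constructor <;> simp [hn₂]
      · have : n₁⁻¹ * g * n₂⁻¹ = σ := by rw [hgeq]; group
        rw [this, hσ, mkGL_coe]

end Doset

section Dmat

variable {lam : ZMod p}

/-- the diagonal matrix `diag(α, 1)` as an element of `GL₂`. -/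
def dmat (α : (ZMod p)ˣ) : GL2 p :=
  mkGL !![(α : ZMod p), 0; 0, 1] (by simp [Matrix.det_fin_two])

@[simp] lemma dmat_coe (α : (ZMod p)ˣ) :
    mat (dmat α) = !![(α : ZMod p), 0; 0, 1] := rfl

lemma dmat_mul (α β : (ZMod p)ˣ) : dmat α * dmat β = dmat (α * β) := by
  apply Matrix.GeneralLinearGroup.ext
  simp only [Fin.forall_fin_two]
  refine ⟨⟨?_, ?_⟩, ?_, ?_⟩ <;>
    · show mat (dmat α * dmat β) _ _ = mat (dmat (α * β)) _ _
      simp [mat_mul_apply]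

lemma dmat_one : dmat (1 : (ZMod p)ˣ) = 1 := by
  apply Matrix.GeneralLinearGroup.ext
  simp only [Fin.forall_fin_two]
  refine ⟨⟨?_, ?_⟩, ?_, ?_⟩ <;>
    · show mat (dmat 1) _ _ = mat 1 _ _
      simp [Matrix.one_apply]

lemma dmat_inv (α : (ZMod p)ˣ) : (dmat α)⁻¹ = dmat α⁻¹ := by
  apply inv_eq_of_mul_eq_one_right
  rw [dmat_mul, mul_inv_cancel, dmat_one]

lemma dmat_mem_Nns_iff (hodd : Odd p) (hlam : ¬ IsSquare lam) (α : (ZMod p)ˣ) :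
    dmat α ∈ Nns p lam ↔ ((α : ZMod p) = 1 ∨ (α : ZMod p) = -1) := by
  rw [mem_Nns_iff hodd hlam]
  unfold isNsh
  simp

/-- decomposition of an element of `N N'` as `diag(α,1) · N'`-element. -/
lemma NsplNns_decomp (hodd : Odd p) (hlam : ¬ IsSquare lam) {h : GL2 p}
    (hh : h ∈ (Nspl p : Set (GL2 p)) * (Nns p lam : Set (GL2 p))) :
    ∃ (α : (ZMod p)ˣ) (k : GL2 p), k ∈ Nns p lam ∧ h = dmat α * k := by
  obtain ⟨n, hn, k₀, hk₀, rfl⟩ := hh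
  replace hn : n ∈ Nspl p := hn
  replace hk₀ : k₀ ∈ Nns p lam := hk₀
  have hΔ := det_expand n
  rw [mem_Nspl_iff hodd] at hn
  rcases hn with ⟨hn1, hn2⟩ | ⟨hn1, hn2⟩
  · have h00 : mat n 0 0 ≠ 0 := fun h => hΔ (by rw [h, hn1]; ring)
    have h11 : mat n 1 1 ≠ 0 := fun h => hΔ (by rw [h, hn2]; ring)
    have hv : mat n 0 0 * (mat n 1 1)⁻¹ ≠ 0 := mul_ne_zero h00 (inv_ne_zero h11)
    refine ⟨Units.mk0 _ hv, (dmat (Units.mk0 _ hv))⁻¹ * n * k₀, ?_, by group⟩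
    refine Subgroup.mul_mem _ ?_ hk₀
    rw [mem_Nns_iff hodd hlam]
    left
    rw [dmat_inv]
    have hval : ((Units.mk0 _ hv)⁻¹ : (ZMod p)ˣ).val = (mat n 0 0 * (mat n 1 1)⁻¹)⁻¹ := by
      rw [Units.val_inv_eq_inv_val, Units.val_mk0]
    constructor
    · show mat (dmat (Units.mk0 _ hv)⁻¹ * n) 0 0 = mat (dmat (Units.mk0 _ hv)⁻¹ * n) 1 1
      rw [mat_mul_apply, mat_mul_apply]
      simp only [dmat_coe, Matrix.cons_val', Matrix.cons_val_zero, Matrix.cons_val_one,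
        Matrix.head_cons, Matrix.empty_val', Matrix.cons_val_fin_one, Matrix.of_apply,
        Matrix.head_fin_const, hval]
      field_simp
      ring
    · show mat (dmat (Units.mk0 _ hv)⁻¹ * n) 0 1 =
        lam * mat (dmat (Units.mk0 _ hv)⁻¹ * n) 1 0
      rw [mat_mul_apply, mat_mul_apply]
      simp only [dmat_coe, Matrix.cons_val', Matrix.cons_val_zero, Matrix.cons_val_one,
        Matrix.head_cons, Matrix.empty_val', Matrix.cons_val_fin_one, Matrix.of_apply,
        Matrix.head_fin_const, hval, hn1, hn2]
      ring
  · have h01 : mat n 0 1 ≠ 0 := fun h => hΔ (by rw [h, hn1]; ring)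
    have h10 : mat n 1 0 ≠ 0 := fun h => hΔ (by rw [h, hn2]; ring)
    have hlam0 : lam ≠ 0 := lam_ne_zero hlam
    have hv : mat n 0 1 * (lam * mat n 1 0)⁻¹ ≠ 0 :=
      mul_ne_zero h01 (inv_ne_zero (mul_ne_zero hlam0 h10))
    refine ⟨Units.mk0 _ hv, (dmat (Units.mk0 _ hv))⁻¹ * n * k₀, ?_, by group⟩
    refine Subgroup.mul_mem _ ?_ hk₀
    rw [mem_Nns_iff hodd hlam]
    left
    rw [dmat_inv]
    have hval : ((Units.mk0 _ hv)⁻¹ : (ZMod p)ˣ).val = (mat n 0 1 * (lam * mat n 1 0)⁻¹)⁻¹ := by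
      rw [Units.val_inv_eq_inv_val, Units.val_mk0]
    constructor
    · show mat (dmat (Units.mk0 _ hv)⁻¹ * n) 0 0 = mat (dmat (Units.mk0 _ hv)⁻¹ * n) 1 1
      rw [mat_mul_apply, mat_mul_apply]
      simp only [dmat_coe, Matrix.cons_val', Matrix.cons_val_zero, Matrix.cons_val_one,
        Matrix.head_cons, Matrix.empty_val', Matrix.cons_val_fin_one, Matrix.of_apply,
        Matrix.head_fin_const, hval, hn1, hn2]
      ring
    · show mat (dmat (Units.mk0 _ hv)⁻¹ * n) 0 1 =
        lam * mat (dmat (Units.mk0 _ hv)⁻¹ * n) 1 0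
      rw [mat_mul_apply, mat_mul_apply]
      simp only [dmat_coe, Matrix.cons_val', Matrix.cons_val_zero, Matrix.cons_val_one,
        Matrix.head_cons, Matrix.empty_val', Matrix.cons_val_fin_one, Matrix.of_apply,
        Matrix.head_fin_const, hval, hn2]
      field_simp
      try ring

/-- when do two `diag(α,1)`-translates give the same `N'`-coset. -/
lemma mk_dmat_eq_iff (hodd : Odd p) (hlam : ¬ IsSquare lam) (g₀ : GL2 p) (α α' : (ZMod p)ˣ) :
    (QuotientGroup.mk (g₀ * dmat α) : GL2 p ⧸ Nns p lam) = QuotientGroup.mk (g₀ * dmat α') ↔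
      ((α' : ZMod p) = α ∨ (α' : ZMod p) = -α) := by
  rw [QuotientGroup.eq]
  have he : (g₀ * dmat α)⁻¹ * (g₀ * dmat α') = dmat α⁻¹ * dmat α' := by
    rw [← dmat_inv]; group
  rw [he, dmat_mul, dmat_mem_Nns_iff hodd hlam]
  have hα : (α : ZMod p) ≠ 0 := α.ne_zero
  rw [Units.val_mul]
  rw [show ((α⁻¹ : (ZMod p)ˣ) : ZMod p) = ((α : ZMod p))⁻¹ from Units.val_inv_eq_inv_val α]
  constructor
  · rintro (h | h) <;> [left; right]
    · field_simp at h; linear_combination h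
    · have h' : (α : ZMod p) * ((α : ZMod p)⁻¹ * α') = (α : ZMod p) * (-1) := by rw [h]
      rw [← mul_assoc, mul_inv_cancel₀ hα, one_mul] at h'
      linear_combination h'
  · rintro (h | h) <;> [left; right] <;>
      (rw [h]; field_simp)

end Dmat

section Invariance

variable {lam : ZMod p}

lemma prodset_rinv (A B : Subgroup (GL2 p)) :
    ∀ s ∈ (A : Set (GL2 p)) * (B : Set (GL2 p)), ∀ k ∈ B,
      s * k ∈ (A : Set (GL2 p)) * (B : Set (GL2 p)) := by
  rintro s ⟨a, ha, b, hb, rfl⟩ k hk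
  exact ⟨a, ha, b * k, mul_mem hb hk, (mul_assoc a b k).symm⟩

lemma subgroup_rinv (A : Subgroup (GL2 p)) :
    ∀ s ∈ (A : Set (GL2 p)), ∀ k ∈ A, s * k ∈ (A : Set (GL2 p)) :=
  fun s hs k hk => mul_mem hs hk

lemma dosetN_rinv (t : ZMod p) :
    ∀ s ∈ dosetN p t, ∀ k ∈ Nspl p, s * k ∈ dosetN p t := by
  rintro s ⟨n₁, h1, n₂, h2, heq⟩ k hk
  refine ⟨n₁, h1, n₂ * k, mul_mem h2 hk, ?_⟩
  have : n₁⁻¹ * (s * k) * (n₂ * k)⁻¹ = n₁⁻¹ * s * n₂⁻¹ := by group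
  rw [this]
  exact heq

set_option synthInstance.maxHeartbeats 1000000 in
/-- membership of a coset in the image of a translated right-invariant set. -/
lemma mem_image_smul_iff {K : Subgroup (GL2 p)} {S : Set (GL2 p)}
    (hS : ∀ s ∈ S, ∀ k ∈ K, s * k ∈ S) (x : GL2 p) (c : GL2 p ⧸ K) :
    (c ∈ QuotientGroup.mk '' (x • S) ↔ x⁻¹ * (Quotient.out c) ∈ S) := by
  constructor
  · rintro ⟨y, hy, hc⟩
    obtain ⟨s, hs, rfl⟩ := hy
    rw [← QuotientGroup.out_eq' c] at hc
    have hk := QuotientGroup.eq.mp hc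
    have : x⁻¹ * Quotient.out c = s * ((x • s)⁻¹ * Quotient.out c) := by
      simp [smul_eq_mul]; group
    rw [this]
    exact hS s hs _ hk
  · intro h
    refine ⟨x * (x⁻¹ * Quotient.out c), ?_, ?_⟩
    · rw [Set.mem_smul_set]
      exact ⟨x⁻¹ * Quotient.out c, h, rfl⟩
    · rw [show x * (x⁻¹ * Quotient.out c) = Quotient.out c by group]
      exact QuotientGroup.out_eq' c

end Invariance

section Counting

variable {lam : ZMod p}

lemma dmat_mem_Nspl (hodd : Odd p) (α : (ZMod p)ˣ) : dmat α ∈ Nspl p := by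
  rw [mem_Nspl_iff hodd]; left; constructor <;> simp

lemma prodset_linv {A B : Subgroup (GL2 p)} {s : GL2 p}
    (hs : s ∈ (A : Set (GL2 p)) * (B : Set (GL2 p))) {k : GL2 p} (hk : k ∈ A) :
    k * s ∈ (A : Set (GL2 p)) * (B : Set (GL2 p)) := by
  obtain ⟨a, ha, b, hb, rfl⟩ := hs
  exact ⟨k * a, mul_mem hk ha, b, hb, by show k * a * b = k * (a * b); rw [mul_assoc]⟩

lemma isMono_rows {g : GL2 p} (h : isMono g) :
    mat g 0 0 * mat g 0 1 = 0 ∧ mat g 1 0 * mat g 1 1 = 0 := by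
  rcases h with ⟨h1, h2⟩ | ⟨h1, h2⟩
  · exact ⟨by rw [h1]; ring, by rw [h2]; ring⟩
  · exact ⟨by rw [h1]; ring, by rw [h2]; ring⟩

lemma isMono_of_rows {g : GL2 p} (h1 : mat g 0 0 * mat g 0 1 = 0)
    (h2 : mat g 1 0 * mat g 1 1 = 0) : isMono g := by
  have hΔ := det_expand g
  rcases mul_eq_zero.mp h1 with ha | hb
  · right
    refine ⟨ha, ?_⟩
    rcases mul_eq_zero.mp h2 with hc | hd
    · exfalso; apply hΔ; rw [ha, hc]; ring
    · exact hd
  · left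
    refine ⟨hb, ?_⟩
    rcases mul_eq_zero.mp h2 with hc | hd
    · exact hc
    · exfalso; apply hΔ; rw [hb, hd]; ring

lemma sqrt_count (hodd : Odd p) {s : ZMod p} (hs : s ≠ 0) :
    (Finset.univ.filter fun α : (ZMod p)ˣ => (α : ZMod p)^2 = s).card
      = if IsSquare s then 2 else 0 := by
  split_ifs with hsq
  · obtain ⟨r, hr⟩ := hsq
    have hr0 : r ≠ 0 := by rintro rfl; rw [hr] at hs; simp at hs
    have hfeq : (Finset.univ.filter fun α : (ZMod p)ˣ => (α : ZMod p)^2 = s)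
        = {Units.mk0 r hr0, -Units.mk0 r hr0} := by
      ext β
      simp only [Finset.mem_filter, Finset.mem_univ, true_and, Finset.mem_insert,
        Finset.mem_singleton]
      constructor
      · intro hβ
        have : (β : ZMod p) * (β : ZMod p) = r * r := by rw [← hr, ← hβ]; ring
        rcases mul_self_eq_mul_self_iff.mp this with h' | h'
        · left; exact Units.ext h'
        · right
          apply Units.ext
          rw [Units.val_neg, Units.val_mk0]
          exact h'
      · rintro (rfl | rfl)
        · rw [Units.val_mk0, hr]; ring
        · rw [Units.val_neg, Units.val_mk0, hr]; ring
    rw [hfeq]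
    rw [Finset.card_insert_of_notMem, Finset.card_singleton]
    rw [Finset.mem_singleton]
    intro hcontra
    have : r = -r := by
      have := congrArg (fun u : (ZMod p)ˣ => (u : ZMod p)) hcontra
      simpa using this
    have h2r : (2 : ZMod p) * r = 0 := by linear_combination this
    rcases mul_eq_zero.mp h2r with h' | h'
    · exact two_ne_zero' hodd h'
    · exact hr0 h'
  · rw [Finset.card_eq_zero, Finset.filter_eq_empty_iff]
    intro β _ hβ
    exact hsq ⟨(β : ZMod p), by rw [← hβ]; ring⟩

lemma square_flip (hlam : ¬ IsSquare lam) {a b c d : ZMod p}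
    (ha : a ≠ 0) (hb : b ≠ 0) (hc : c ≠ 0) (hd : d ≠ 0) :
    (IsSquare ((a * b) * (lam * (c * d))⁻¹) ↔ ¬ IsSquare ((a * d) * (b * c)⁻¹)) := by
  have hlam0 : lam ≠ 0 := lam_ne_zero hlam
  set X := (a * b) * (lam * (c * d))⁻¹ with hX
  set Y := (a * d) * (b * c)⁻¹ with hY
  have hX0 : X ≠ 0 :=
    mul_ne_zero (mul_ne_zero ha hb) (inv_ne_zero (mul_ne_zero hlam0 (mul_ne_zero hc hd)))
  have hY0 : Y ≠ 0 :=
    mul_ne_zero (mul_ne_zero ha hd) (inv_ne_zero (mul_ne_zero hb hc))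
  have hXY : X * Y = (a * c⁻¹)^2 * lam⁻¹ := by
    rw [hX, hY]
    field_simp
  have hlaminv : quadraticChar (ZMod p) lam⁻¹ = -1 := by
    have h1 : quadraticChar (ZMod p) lam = -1 :=
      quadraticChar_neg_one_iff_not_isSquare.mpr hlam
    have h2 : quadraticChar (ZMod p) lam * quadraticChar (ZMod p) lam⁻¹ = 1 := by
      rw [← _root_.map_mul, mul_inv_cancel₀ hlam0, _root_.map_one]
    rw [h1] at h2
    omega
  have hprod : quadraticChar (ZMod p) X * quadraticChar (ZMod p) Y = -1 := by
    rw [← _root_.map_mul, hXY, _root_.map_mul, quadraticChar_sq_one' (mul_ne_zero ha (inv_ne_zero hc)),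
      one_mul, hlaminv]
  constructor
  · intro hXsq
    rw [← quadraticChar_neg_one_iff_not_isSquare]
    have h1 : quadraticChar (ZMod p) X = 1 := (quadraticChar_one_iff_isSquare hX0).mpr hXsq
    rw [h1, one_mul] at hprod
    exact hprod
  · intro hYns
    have h1 : quadraticChar (ZMod p) Y = -1 :=
      quadraticChar_neg_one_iff_not_isSquare.mpr hYns
    rw [h1] at hprod
    have : quadraticChar (ZMod p) X = 1 := by omega
    exact (quadraticChar_one_iff_isSquare hX0).mp this

end Counting

section KeyCount

variable {lam : ZMod p}

/-- The central counting step: twice the number of intermediate `N'`-cosets equals the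
number of square roots. -/
lemma key_count (hodd : Odd p) (hlam : ¬ IsSquare lam) (g₀ x : GL2 p) :
    2 * (Finset.univ.filter (fun e : GL2 p ⧸ Nns p lam =>
        g₀⁻¹ * Quotient.out e ∈ (Nspl p : Set (GL2 p)) * (Nns p lam : Set (GL2 p)) ∧
        (Quotient.out e)⁻¹ * x ∈ (Nns p lam : Set (GL2 p)) * (Nspl p : Set (GL2 p)))).card
    = (Finset.univ.filter (fun α : (ZMod p)ˣ =>
        mat (g₀⁻¹ * x) 0 0 * mat (g₀⁻¹ * x) 0 1 =
          (α : ZMod p)^2 * (lam * (mat (g₀⁻¹ * x) 1 0 * mat (g₀⁻¹ * x) 1 1)))).card := by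
  classical
  set G : GL2 p := g₀⁻¹ * x with hG
  have hent : ∀ α : (ZMod p)ˣ,
      mat (dmat α * G) 0 0 = (α : ZMod p) * mat G 0 0 ∧
      mat (dmat α * G) 0 1 = (α : ZMod p) * mat G 0 1 ∧
      mat (dmat α * G) 1 0 = mat G 1 0 ∧
      mat (dmat α * G) 1 1 = mat G 1 1 := by
    intro α
    refine ⟨?_, ?_, ?_, ?_⟩ <;> (rw [mat_mul_apply]; simp)
  have fact1 : ∀ α : (ZMod p)ˣ,
      ((dmat α)⁻¹ * G ∈ (Nns p lam : Set (GL2 p)) * (Nspl p : Set (GL2 p))) ↔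
        mat G 0 0 * mat G 0 1 = (α : ZMod p)^2 * (lam * (mat G 1 0 * mat G 1 1)) := by
    intro α
    rw [dmat_inv, mem_NnsNspl_iff hodd hlam]
    rw [(hent α⁻¹).1, (hent α⁻¹).2.1, (hent α⁻¹).2.2.1, (hent α⁻¹).2.2.2]
    rw [show ((α⁻¹ : (ZMod p)ˣ) : ZMod p) = ((α : ZMod p))⁻¹ from Units.val_inv_eq_inv_val α]
    have hu : (α : ZMod p) ≠ 0 := α.ne_zero
    constructor
    · intro h
      have h' : mat G 0 0 * mat G 0 1 =
          (α : ZMod p)^2 * ((α : ZMod p)⁻¹ * mat G 0 0 * ((α : ZMod p)⁻¹ * mat G 0 1)) := by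
        field_simp
      rw [h', h]
    · intro h
      have h' : (α : ZMod p)⁻¹ * mat G 0 0 * ((α : ZMod p)⁻¹ * mat G 0 1) =
          ((α : ZMod p)⁻¹)^2 * (mat G 0 0 * mat G 0 1) := by ring
      rw [h', h]
      field_simp
  have hmap : ∀ α ∈ (Finset.univ.filter (fun α : (ZMod p)ˣ =>
      mat G 0 0 * mat G 0 1 = (α : ZMod p)^2 * (lam * (mat G 1 0 * mat G 1 1)))),
      (QuotientGroup.mk (g₀ * dmat α) : GL2 p ⧸ Nns p lam) ∈
        (Finset.univ.filter (fun e : GL2 p ⧸ Nns p lam =>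
          g₀⁻¹ * Quotient.out e ∈ (Nspl p : Set (GL2 p)) * (Nns p lam : Set (GL2 p)) ∧
          (Quotient.out e)⁻¹ * x ∈ (Nns p lam : Set (GL2 p)) * (Nspl p : Set (GL2 p)))) := by
    intro α hα
    rw [Finset.mem_filter] at hα ⊢
    obtain ⟨-, hcond⟩ := hα
    have hk' : (g₀ * dmat α)⁻¹ *
        Quotient.out (QuotientGroup.mk (g₀ * dmat α) : GL2 p ⧸ Nns p lam) ∈ Nns p lam :=
      QuotientGroup.eq.mp (QuotientGroup.out_eq' _).symm
    refine ⟨Finset.mem_univ _, ?_, ?_⟩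
    · have hrw : g₀⁻¹ * Quotient.out (QuotientGroup.mk (g₀ * dmat α) : GL2 p ⧸ Nns p lam) =
          dmat α * ((g₀ * dmat α)⁻¹ *
            Quotient.out (QuotientGroup.mk (g₀ * dmat α) : GL2 p ⧸ Nns p lam)) := by
        group
      rw [hrw]
      exact ⟨dmat α, dmat_mem_Nspl hodd α, _, hk', rfl⟩
    · have hrw : (Quotient.out (QuotientGroup.mk (g₀ * dmat α) : GL2 p ⧸ Nns p lam))⁻¹ * x =
          ((g₀ * dmat α)⁻¹ *
            Quotient.out (QuotientGroup.mk (g₀ * dmat α) : GL2 p ⧸ Nns p lam))⁻¹ *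
            ((dmat α)⁻¹ * G) := by
        rw [hG]; group
      rw [hrw]
      exact prodset_linv ((fact1 α).mpr hcond) (Subgroup.inv_mem _ hk')
  have hfib : ∀ e ∈ (Finset.univ.filter (fun e : GL2 p ⧸ Nns p lam =>
      g₀⁻¹ * Quotient.out e ∈ (Nspl p : Set (GL2 p)) * (Nns p lam : Set (GL2 p)) ∧
      (Quotient.out e)⁻¹ * x ∈ (Nns p lam : Set (GL2 p)) * (Nspl p : Set (GL2 p)))),
      ((Finset.univ.filter (fun α : (ZMod p)ˣ =>
        mat G 0 0 * mat G 0 1 = (α : ZMod p)^2 * (lam * (mat G 1 0 * mat G 1 1)))).filter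
          (fun α => (QuotientGroup.mk (g₀ * dmat α) : GL2 p ⧸ Nns p lam) = e)).card = 2 := by
    intro e he
    rw [Finset.mem_filter] at he
    obtain ⟨-, hQ1, hQ2⟩ := he
    obtain ⟨α₀, k, hk, heq⟩ := NsplNns_decomp hodd hlam hQ1
    have hout : Quotient.out e = g₀ * (dmat α₀ * k) := by
      rw [← heq]; group
    have he' : e = QuotientGroup.mk (g₀ * dmat α₀) := by
      conv_lhs => rw [← QuotientGroup.out_eq' e]
      rw [hout, ← mul_assoc]
      exact QuotientGroup.mk_mul_of_mem _ hk
    have hcond₀ : mat G 0 0 * mat G 0 1 =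
        ((α₀ : ZMod p))^2 * (lam * (mat G 1 0 * mat G 1 1)) := by
      apply (fact1 α₀).mp
      have hrw : (dmat α₀)⁻¹ * G = k * ((Quotient.out e)⁻¹ * x) := by
        rw [hout, hG]; group
      rw [hrw]
      exact prodset_linv hQ2 hk
    have hα₀ : (α₀ : ZMod p) ≠ 0 := α₀.ne_zero
    have hne : α₀ ≠ -α₀ := by
      intro h
      have hv := congrArg (fun u : (ZMod p)ˣ => (u : ZMod p)) h
      simp only [Units.val_neg] at hv
      have h2r : (2 : ZMod p) * (α₀ : ZMod p) = 0 := by linear_combination hv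
      rcases mul_eq_zero.mp h2r with h' | h'
      · exact two_ne_zero' hodd h'
      · exact hα₀ h'
    have hfeq : ((Finset.univ.filter (fun α : (ZMod p)ˣ =>
        mat G 0 0 * mat G 0 1 = (α : ZMod p)^2 * (lam * (mat G 1 0 * mat G 1 1)))).filter
          (fun α => (QuotientGroup.mk (g₀ * dmat α) : GL2 p ⧸ Nns p lam) = e)) =
        {α₀, -α₀} := by
      ext β
      simp only [Finset.mem_filter, Finset.mem_univ, true_and, Finset.mem_insert,
        Finset.mem_singleton]
      constructor
      · rintro ⟨hβcond, hβe⟩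
        rw [he'] at hβe
        rcases (mk_dmat_eq_iff hodd hlam g₀ β α₀).mp hβe with h' | h'
        · left; exact (Units.ext h').symm
        · right
          apply Units.ext
          rw [Units.val_neg]
          linear_combination h'
      · rintro (rfl | rfl)
        · exact ⟨hcond₀, by rw [he']⟩
        · refine ⟨?_, ?_⟩
          · rw [Units.val_neg, neg_sq]
            exact hcond₀
          · rw [he']
            exact (mk_dmat_eq_iff hodd hlam g₀ (-α₀) α₀).mpr
              (Or.inr (by rw [Units.val_neg, neg_neg]))
    rw [hfeq, Finset.card_insert_of_notMem (by simpa using hne), Finset.card_singleton]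
  symm
  rw [Finset.card_eq_sum_card_fiberwise hmap, Finset.sum_congr rfl hfib,
    Finset.sum_const, smul_eq_mul, mul_comm]

end KeyCount

section PairIdentity

variable {lam : ZMod p}

lemma pair_identity (hodd : Odd p) (hlam : ¬ IsSquare lam) (Tr : Finset (ZMod p))
    (hTr1 : ∀ t ∈ Tr, t ≠ 1 ∧ ¬ IsSquare t)
    (hTr2 : ∀ s : ZMod p, s ≠ 1 → ¬ IsSquare s → ∃! t, t ∈ Tr ∧ (t = s ∨ t = s⁻¹))
    (g₀ x : GL2 p) :
    (∑ e : GL2 p ⧸ Nns p lam,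
      (if g₀⁻¹ * Quotient.out e ∈ (Nspl p : Set (GL2 p)) * (Nns p lam : Set (GL2 p))
        then (1:ℤ) else 0) *
      (if (Quotient.out e)⁻¹ * x ∈ (Nns p lam : Set (GL2 p)) * (Nspl p : Set (GL2 p))
        then (1:ℤ) else 0))
    = (((p : ℤ) - 1) / 2) * (if g₀⁻¹ * x ∈ (Nspl p : Set (GL2 p)) then 1 else 0)
      + ∑ t ∈ Tr, (if g₀⁻¹ * x ∈ dosetN p t then 1 else 0) := by
  classical
  have hmerge : ∀ e : GL2 p ⧸ Nns p lam,
      (if g₀⁻¹ * Quotient.out e ∈ (Nspl p : Set (GL2 p)) * (Nns p lam : Set (GL2 p))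
        then (1:ℤ) else 0) *
      (if (Quotient.out e)⁻¹ * x ∈ (Nns p lam : Set (GL2 p)) * (Nspl p : Set (GL2 p))
        then (1:ℤ) else 0) =
      if (g₀⁻¹ * Quotient.out e ∈ (Nspl p : Set (GL2 p)) * (Nns p lam : Set (GL2 p)) ∧
        (Quotient.out e)⁻¹ * x ∈ (Nns p lam : Set (GL2 p)) * (Nspl p : Set (GL2 p)))
        then (1:ℤ) else 0 := by
    intro e
    by_cases h1 : g₀⁻¹ * Quotient.out e ∈ (Nspl p : Set (GL2 p)) * (Nns p lam : Set (GL2 p)) <;>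
      by_cases h2 : (Quotient.out e)⁻¹ * x ∈
        (Nns p lam : Set (GL2 p)) * (Nspl p : Set (GL2 p)) <;>
      simp [h1, h2]
  rw [Finset.sum_congr rfl (fun e _ => hmerge e), Finset.sum_boole]
  have hkey := key_count hodd hlam g₀ x
  set G : GL2 p := g₀⁻¹ * x with hG
  have hdet := det_expand G
  have hlam0 : lam ≠ 0 := lam_ne_zero hlam
  have hdvd : (2 : ℤ) ∣ ((p : ℤ) - 1) := by
    obtain ⟨k, hk⟩ := hodd
    exact ⟨k, by push_cast [hk]; ring⟩
  by_cases hmono : isMono G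
  · -- `G ∈ N`: all cosets contribute, no double cosets
    have hN : G ∈ (Nspl p : Set (GL2 p)) := (mem_Nspl_iff hodd G).mpr hmono
    obtain ⟨hA, hB⟩ := isMono_rows hmono
    have hScard : (Finset.univ.filter (fun α : (ZMod p)ˣ =>
        mat G 0 0 * mat G 0 1 = (α : ZMod p)^2 * (lam * (mat G 1 0 * mat G 1 1)))).card
        = p - 1 := by
      rw [Finset.filter_true_of_mem (fun α _ => by rw [hA, hB]; ring), Finset.card_univ,
        ZMod.card_units]
    have hdoset0 : ∀ t ∈ Tr, (if G ∈ dosetN p t then (1:ℤ) else 0) = 0 := by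
      intro t ht
      rw [if_neg]
      intro hmem
      obtain ⟨ht1, htns⟩ := hTr1 t ht
      have ht0 : t ≠ 0 := fun h => htns (h ▸ ⟨0, by ring⟩)
      obtain ⟨⟨z1, z2, z3, z4⟩, -⟩ := (mem_dosetN_iff hodd ht0 ht1 G).mp hmem
      rcases mul_eq_zero.mp hA with h' | h'
      exacts [z1 h', z2 h']
    rw [Finset.sum_congr rfl hdoset0, Finset.sum_const_zero, add_zero, if_pos hN, mul_one]
    have hp1 : (1 : ℕ) ≤ p := (Fact.out : p.Prime).one_lt.le.trans' (by norm_num)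
    have hcast : ((p : ℤ) - 1) = 2 * (((Finset.univ.filter (fun e : GL2 p ⧸ Nns p lam =>
        g₀⁻¹ * Quotient.out e ∈ (Nspl p : Set (GL2 p)) * (Nns p lam : Set (GL2 p)) ∧
        (Quotient.out e)⁻¹ * x ∈
          (Nns p lam : Set (GL2 p)) * (Nspl p : Set (GL2 p)))).card : ℤ)) := by
      rw [hScard] at hkey
      omega
    rw [hcast, Int.mul_ediv_cancel_left _ (by norm_num : (2:ℤ) ≠ 0)]
  · -- `G ∉ N`
    have hN0 : G ∉ (Nspl p : Set (GL2 p)) := fun h => hmono ((mem_Nspl_iff hodd G).mp h)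
    rw [if_neg hN0, mul_zero, zero_add]
    by_cases hz : entsNZ G
    · obtain ⟨z1, z2, z3, z4⟩ := hz
      set r : ZMod p := (mat G 0 0 * mat G 1 1) * (mat G 0 1 * mat G 1 0)⁻¹ with hr
      have hbc : mat G 0 1 * mat G 1 0 ≠ 0 := mul_ne_zero z2 z3
      have had : mat G 0 0 * mat G 1 1 ≠ 0 := mul_ne_zero z1 z4
      have hr0 : r ≠ 0 := mul_ne_zero had (inv_ne_zero hbc)
      have hr1 : r ≠ 1 := by
        intro h
        apply hdet
        have h2 := congrArg (fun z => z * (mat G 0 1 * mat G 1 0)) h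
        simp only [one_mul] at h2
        rw [hr] at h2
        field_simp at h2
        linear_combination h2
      have hflip := square_flip (p := p) hlam z1 z2 z3 z4
      have hs0 : (mat G 0 0 * mat G 0 1) * (lam * (mat G 1 0 * mat G 1 1))⁻¹ ≠ 0 :=
        mul_ne_zero (mul_ne_zero z1 z2)
          (inv_ne_zero (mul_ne_zero hlam0 (mul_ne_zero z3 z4)))
      have hcondiff : ∀ α : (ZMod p)ˣ,
          (mat G 0 0 * mat G 0 1 = (α : ZMod p)^2 * (lam * (mat G 1 0 * mat G 1 1))) ↔
          ((α : ZMod p)^2 = (mat G 0 0 * mat G 0 1) * (lam * (mat G 1 0 * mat G 1 1))⁻¹) := by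
        intro α
        constructor
        · intro h
          rw [h]
          field_simp
        · intro h
          rw [h]
          field_simp
      have hSeq : (Finset.univ.filter (fun α : (ZMod p)ˣ =>
          mat G 0 0 * mat G 0 1 = (α : ZMod p)^2 * (lam * (mat G 1 0 * mat G 1 1)))).card
          = if IsSquare ((mat G 0 0 * mat G 0 1) * (lam * (mat G 1 0 * mat G 1 1))⁻¹)
            then 2 else 0 := by
        rw [Finset.filter_congr (fun α _ => hcondiff α)]
        exact sqrt_count hodd hs0
      have hmemiff : ∀ t, t ≠ 0 → t ≠ 1 → (G ∈ dosetN p t ↔ (t = r ∨ t = r⁻¹)) := by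
        intro t ht0 ht1
        rw [mem_dosetN_iff hodd ht0 ht1]
        have hrinv : r⁻¹ = (mat G 0 1 * mat G 1 0) * (mat G 0 0 * mat G 1 1)⁻¹ := by
          rw [hr, _root_.mul_inv_rev, inv_inv]
        constructor
        · rintro ⟨-, hor | hor⟩
          · left
            rw [hr]
            field_simp
            first | linear_combination hor | linear_combination -hor
          · right
            rw [hrinv]
            field_simp
            first | linear_combination hor | linear_combination -hor
        · rintro (rfl | rfl)
          · refine ⟨⟨z1, z2, z3, z4⟩, Or.inl ?_⟩
            rw [hr]
            field_simp
            try ring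
          · refine ⟨⟨z1, z2, z3, z4⟩, Or.inr ?_⟩
            rw [hrinv]
            field_simp
            try ring
      by_cases hsq : IsSquare r
      · -- `r` square: no contribution
        have hnsq : ¬ IsSquare ((mat G 0 0 * mat G 0 1) * (lam * (mat G 1 0 * mat G 1 1))⁻¹) :=
          fun h => hflip.mp h hsq
        rw [if_neg hnsq] at hSeq
        rw [hSeq] at hkey
        have hc0 : (Finset.univ.filter (fun e : GL2 p ⧸ Nns p lam =>
            g₀⁻¹ * Quotient.out e ∈ (Nspl p : Set (GL2 p)) * (Nns p lam : Set (GL2 p)) ∧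
            (Quotient.out e)⁻¹ * x ∈
              (Nns p lam : Set (GL2 p)) * (Nspl p : Set (GL2 p)))).card = 0 := by omega
        rw [hc0]
        have hdoset0 : ∀ t ∈ Tr, (if G ∈ dosetN p t then (1:ℤ) else 0) = 0 := by
          intro t ht
          obtain ⟨ht1, htns⟩ := hTr1 t ht
          have ht0 : t ≠ 0 := fun h => htns (h ▸ ⟨0, by ring⟩)
          rw [if_neg]
          intro hmem
          rcases (hmemiff t ht0 ht1).mp hmem with rfl | rfl
          · exact htns hsq
          · apply htns
            obtain ⟨w, hw⟩ := hsq
            have hw0 : w ≠ 0 := by rintro rfl; rw [hw] at hr0; simp at hr0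
            exact ⟨w⁻¹, by rw [hw]; field_simp⟩
        rw [Finset.sum_congr rfl hdoset0, Finset.sum_const_zero]
        norm_num
      · -- `r` nonsquare: exactly one double coset
        have hssq : IsSquare ((mat G 0 0 * mat G 0 1) * (lam * (mat G 1 0 * mat G 1 1))⁻¹) :=
          hflip.mpr hsq
        rw [if_pos hssq] at hSeq
        rw [hSeq] at hkey
        have hc1 : (Finset.univ.filter (fun e : GL2 p ⧸ Nns p lam =>
            g₀⁻¹ * Quotient.out e ∈ (Nspl p : Set (GL2 p)) * (Nns p lam : Set (GL2 p)) ∧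
            (Quotient.out e)⁻¹ * x ∈
              (Nns p lam : Set (GL2 p)) * (Nspl p : Set (GL2 p)))).card = 1 := by omega
        rw [hc1]
        obtain ⟨t₀, ⟨ht₀Tr, ht₀or⟩, huniq⟩ := hTr2 r hr1 hsq
        obtain ⟨ht₀1, ht₀ns⟩ := hTr1 t₀ ht₀Tr
        have ht₀0 : t₀ ≠ 0 := fun h => ht₀ns (h ▸ ⟨0, by ring⟩)
        rw [Finset.sum_eq_single_of_mem t₀ ht₀Tr]
        · rw [if_pos ((hmemiff t₀ ht₀0 ht₀1).mpr ht₀or)]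
          norm_num
        · intro t ht htne
          obtain ⟨ht1, htns⟩ := hTr1 t ht
          have ht0 : t ≠ 0 := fun h => htns (h ▸ ⟨0, by ring⟩)
          rw [if_neg]
          intro hmem
          exact htne (huniq t ⟨ht, (hmemiff t ht0 ht1).mp hmem⟩)
    · -- some entry vanishes but `G ∉ N`: no contribution at all
      have hAB : (mat G 0 0 * mat G 0 1) * (mat G 1 0 * mat G 1 1) = 0 := by
        unfold entsNZ at hz
        push_neg at hz
        by_cases h1 : mat G 0 0 = 0
        · rw [h1]; ring
        by_cases h2 : mat G 0 1 = 0
        · rw [h2]; ring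
        by_cases h3 : mat G 1 0 = 0
        · rw [h3]; ring
        rw [hz h1 h2 h3]; ring
      have hone : ¬ (mat G 0 0 * mat G 0 1 = 0 ∧ mat G 1 0 * mat G 1 1 = 0) := by
        rintro ⟨h1, h2⟩
        exact hmono (isMono_of_rows h1 h2)
      have hS0 : (Finset.univ.filter (fun α : (ZMod p)ˣ =>
          mat G 0 0 * mat G 0 1 = (α : ZMod p)^2 * (lam * (mat G 1 0 * mat G 1 1)))).card
          = 0 := by
        rw [Finset.card_eq_zero, Finset.filter_eq_empty_iff]
        intro α _
        intro hcond
        rcases mul_eq_zero.mp hAB with h' | h'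
        · rw [h'] at hcond
          have : (α : ZMod p)^2 * (lam * (mat G 1 0 * mat G 1 1)) = 0 := hcond.symm
          rcases mul_eq_zero.mp this with h'' | h''
          · exact α.ne_zero (pow_eq_zero_iff (by norm_num) |>.mp h'')
          · rcases mul_eq_zero.mp h'' with h3 | h3
            · exact hlam0 h3
            · exact hone ⟨h', h3⟩
        · rw [h'] at hcond
          apply hone
          refine ⟨?_, h'⟩
          rw [hcond]; ring
      rw [hS0] at hkey
      have hc0 : (Finset.univ.filter (fun e : GL2 p ⧸ Nns p lam =>
          g₀⁻¹ * Quotient.out e ∈ (Nspl p : Set (GL2 p)) * (Nns p lam : Set (GL2 p)) ∧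
          (Quotient.out e)⁻¹ * x ∈
            (Nns p lam : Set (GL2 p)) * (Nspl p : Set (GL2 p)))).card = 0 := by omega
      rw [hc0]
      have hdoset0 : ∀ t ∈ Tr, (if G ∈ dosetN p t then (1:ℤ) else 0) = 0 := by
        intro t ht
        obtain ⟨ht1, htns⟩ := hTr1 t ht
        have ht0 : t ≠ 0 := fun h => htns (h ▸ ⟨0, by ring⟩)
        rw [if_neg]
        intro hmem
        obtain ⟨hz', -⟩ := (mem_dosetN_iff hodd ht0 ht1 G).mp hmem
        exact hz hz'
      rw [Finset.sum_congr rfl hdoset0, Finset.sum_const_zero]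
      norm_num

end PairIdentity

end Chen

set_option synthInstance.maxHeartbeats 1000000 in
set_option maxHeartbeats 2000000 in
open Chen in
/-- **Lemma 8.2.** In `ℤ[N\\G/N]`, the composite double coset operator
`NN' × N'N : ℤ[G/N] → ℤ[G/N'] → ℤ[G/N]` equals `((p−1)/2)·N + Σ_t Nσ_tN`, the sum over
representatives `t` of the classes `t ∼ t⁻¹` of non-squares `t ∈ 𝔽_p ∖ {1}`. -/
theorem NNprime_op_decomposition (p : ℕ) [Fact p.Prime] (hodd : Odd p)
    (lam : ZMod p) (hlam : ¬ IsSquare lam)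
    (Tr : Finset (ZMod p))
    (hTr1 : ∀ t ∈ Tr, t ≠ 1 ∧ ¬ IsSquare t)
    (hTr2 : ∀ s : ZMod p, s ≠ 1 → ¬ IsSquare s → ∃! t, t ∈ Tr ∧ (t = s ∨ t = s⁻¹)) :
    (T ℤ (Nns p lam) (Nspl p) (((Nns p lam : Set (GL2 p)) * (Nspl p : Set (GL2 p))))).comp
      (T ℤ (Nspl p) (Nns p lam) (((Nspl p : Set (GL2 p)) * (Nns p lam : Set (GL2 p))))) =
    (((p : ℤ) - 1) / 2) • T ℤ (Nspl p) (Nspl p) ((Nspl p : Set (GL2 p))) +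
      ∑ t ∈ Tr, T ℤ (Nspl p) (Nspl p) (dosetN p t) := by
  classical
  apply LinearMap.ext
  intro v
  funext c
  have hTapp : ∀ (H K : Subgroup (GL2 p)) (S : Set (GL2 p)) (w : (GL2 p ⧸ H) → ℤ)
      (c' : GL2 p ⧸ K), T ℤ H K S w c' =
      ∑ d : GL2 p ⧸ H, w d *
        (if c' ∈ QuotientGroup.mk '' ((Quotient.out d) • S) then 1 else 0) :=
    fun _ _ _ _ _ => rfl
  simp only [LinearMap.comp_apply, LinearMap.add_apply, LinearMap.smul_apply,
    LinearMap.coe_sum, Finset.sum_apply, Pi.add_apply, Pi.smul_apply, smul_eq_mul, hTapp]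
  trans (∑ d : GL2 p ⧸ Nspl p, v d * ((((p : ℤ) - 1) / 2) *
      (if c ∈ QuotientGroup.mk '' ((Quotient.out d) • (Nspl p : Set (GL2 p))) then 1 else 0)
    + ∑ t ∈ Tr, (if c ∈ QuotientGroup.mk '' ((Quotient.out d) • dosetN p t) then 1 else 0)))
  · -- LHS: exchange sums and apply the pair identity
    simp only [Finset.sum_mul]
    rw [Finset.sum_comm]
    simp only [mul_assoc]
    simp only [← Finset.mul_sum]
    refine Finset.sum_congr rfl fun d _ => ?_
    congr 1
    have hrw1 : ∀ e : GL2 p ⧸ Nns p lam,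
        (e ∈ QuotientGroup.mk '' ((Quotient.out d) •
          ((Nspl p : Set (GL2 p)) * (Nns p lam : Set (GL2 p))))) ↔
        (Quotient.out d)⁻¹ * Quotient.out e ∈
          (Nspl p : Set (GL2 p)) * (Nns p lam : Set (GL2 p)) :=
      fun e => mem_image_smul_iff (prodset_rinv (Nspl p) (Nns p lam)) (Quotient.out d) e
    have hrw2 : ∀ e : GL2 p ⧸ Nns p lam,
        (c ∈ QuotientGroup.mk '' ((Quotient.out e) •
          ((Nns p lam : Set (GL2 p)) * (Nspl p : Set (GL2 p))))) ↔
        (Quotient.out e)⁻¹ * Quotient.out c ∈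
          (Nns p lam : Set (GL2 p)) * (Nspl p : Set (GL2 p)) :=
      fun e => mem_image_smul_iff (prodset_rinv (Nns p lam) (Nspl p)) (Quotient.out e) c
    have hrwN : (c ∈ QuotientGroup.mk '' ((Quotient.out d) • (Nspl p : Set (GL2 p)))) ↔
        (Quotient.out d)⁻¹ * Quotient.out c ∈ (Nspl p : Set (GL2 p)) :=
      mem_image_smul_iff (subgroup_rinv (Nspl p)) (Quotient.out d) c
    have hrwT : ∀ t : ZMod p,
        (c ∈ QuotientGroup.mk '' ((Quotient.out d) • dosetN p t)) ↔
        (Quotient.out d)⁻¹ * Quotient.out c ∈ dosetN p t :=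
      fun t => mem_image_smul_iff (dosetN_rinv t) (Quotient.out d) c
    calc (∑ e : GL2 p ⧸ Nns p lam,
        (if e ∈ QuotientGroup.mk '' ((Quotient.out d) •
            ((Nspl p : Set (GL2 p)) * (Nns p lam : Set (GL2 p)))) then (1:ℤ) else 0) *
        (if c ∈ QuotientGroup.mk '' ((Quotient.out e) •
            ((Nns p lam : Set (GL2 p)) * (Nspl p : Set (GL2 p)))) then (1:ℤ) else 0))
        = (∑ e : GL2 p ⧸ Nns p lam,
          (if (Quotient.out d)⁻¹ * Quotient.out e ∈
              (Nspl p : Set (GL2 p)) * (Nns p lam : Set (GL2 p)) then (1:ℤ) else 0) *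
          (if (Quotient.out e)⁻¹ * Quotient.out c ∈
              (Nns p lam : Set (GL2 p)) * (Nspl p : Set (GL2 p)) then (1:ℤ) else 0)) := by
          refine Finset.sum_congr rfl fun e _ => ?_
          rw [if_congr (hrw1 e) rfl rfl, if_congr (hrw2 e) rfl rfl]
      _ = (((p : ℤ) - 1) / 2) *
            (if (Quotient.out d)⁻¹ * Quotient.out c ∈ (Nspl p : Set (GL2 p)) then 1 else 0)
          + ∑ t ∈ Tr, (if (Quotient.out d)⁻¹ * Quotient.out c ∈ dosetN p t then 1 else 0) :=
          pair_identity hodd hlam Tr hTr1 hTr2 (Quotient.out d) (Quotient.out c)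
      _ = (((p : ℤ) - 1) / 2) *
            (if c ∈ QuotientGroup.mk '' ((Quotient.out d) • (Nspl p : Set (GL2 p)))
              then 1 else 0)
          + ∑ t ∈ Tr, (if c ∈ QuotientGroup.mk '' ((Quotient.out d) • dosetN p t)
              then 1 else 0) := by
          rw [if_congr hrwN rfl rfl]
          congr 1
          refine Finset.sum_congr rfl fun t _ => ?_
          rw [if_congr (hrwT t) rfl rfl]
  · -- RHS: redistribute the sums
    simp only [mul_add, Finset.sum_add_distrib]
    congr 1
    · rw [Finset.mul_sum]
      refine Finset.sum_congr rfl fun d _ => ?_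
      ring
    · rw [Finset.sum_comm]
      refine Finset.sum_congr rfl fun d _ => ?_
      rw [Finset.mul_sum]
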